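/- arXiv:1811.08748 — 2 statements merged into one kernel-verified Lean document; each statement's English description precedes it below -/
import Mathlib

section
/- Every Lie group has no small subgroups: there exists a neighborhood U of the identity such that the only subgroup contained in U is the trivial subgroup. -/
/-!
In the chart at the identity, the squaring map `g ↦ g * g` has derivative `2 • id`, so near the
identity it pushes points away from it by a factor of at least `3 / 2`. If a subgroup inside a small
chart ball contained some `g ≠ 1`, the chart distances of `g ^ 2 ^ n` from the identity would grow
like `(3 / 2) ^ n` while staying bounded.
-/

open Set Filter Topology Metric

theorem HasFDerivWithinAt.eventually_mul_norm_sub_le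
    {𝕜 : Type*} [NontriviallyNormedField 𝕜]
    {E : Type*} [NormedAddCommGroup E] [NormedSpace 𝕜 E]
    {F : Type*} [NormedAddCommGroup F] [NormedSpace 𝕜 F]
    {f : E → F} {L : E →L[𝕜] F} {s : Set E} {c : E} {k k' : ℝ}
    (hf : HasFDerivWithinAt f L s c) (hL : ∀ v, k * ‖v‖ ≤ ‖L v‖) (hk' : k' < k) :
    ∀ᶠ x in 𝓝[s] c, k' * ‖x - c‖ ≤ ‖f x - f c‖ := by
  filter_upwards [hf.isLittleO.def (sub_pos.mpr hk')] with x hx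
  have htri := norm_sub_norm_le (L (x - c)) (L (x - c) - (f x - f c))
  rw [sub_sub_cancel, norm_sub_rev] at htri
  linarith [hL (x - c)]

theorem le_zero_of_forall_pow_two_pow_mem {M : Type*} [Monoid M] {U : Set M} {φ : M → ℝ}
    {k r : ℝ} (hk : 1 < k) (hφr : ∀ g ∈ U, φ g ≤ r) (hsq : ∀ g ∈ U, k * φ g ≤ φ (g * g))
    {g : M} (hg : ∀ n : ℕ, g ^ 2 ^ n ∈ U) : φ g ≤ 0 := by
  have hgrow : ∀ n : ℕ, k ^ n * φ g ≤ φ (g ^ 2 ^ n) := by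
    intro n
    induction n with
    | zero => simp
    | succ n ih =>
      rw [pow_succ (2 : ℕ), pow_mul, sq]
      calc k ^ (n + 1) * φ g = k * (k ^ n * φ g) := by ring
        _ ≤ k * φ (g ^ 2 ^ n) := by gcongr
        _ ≤ φ (g ^ 2 ^ n * g ^ 2 ^ n) := hsq _ (hg n)
  by_contra! hpos
  obtain ⟨n, hn⟩ := pow_unbounded_of_one_lt (r / φ g) hk
  rw [div_lt_iff₀ hpos] at hn
  linarith [hgrow n, hφr _ (hg n)]

section

variable {E : Type*} [NormedAddCommGroup E] [NormedSpace ℝ E]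
  {H : Type*} [TopologicalSpace H] {I : ModelWithCorners ℝ E H}
  {G : Type*} [TopologicalSpace G] [ChartedSpace H G] [Monoid G] [ContMDiffMul I 1 G]

theorem mfderiv_mul_self_one :
    mfderiv I I (fun g : G => g * g) 1 = (2 : ℝ) • ContinuousLinearMap.id ℝ E := by
  have hmul : MDifferentiableAt (I.prod I) I (fun p : G × G => p.1 * p.2) (1, 1) :=
    (contMDiff_mul I 1 _).mdifferentiableAt one_ne_zero
  have hdiag : MDifferentiableAt I (I.prod I) (fun g : G => (g, g)) 1 :=
    mdifferentiableAt_id.prodMk mdifferentiableAt_id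
  ext v
  have hdiag_apply : mfderiv I (I.prod I) (fun g : G => (g, g)) 1 v = (v, v) :=
    DFunLike.congr_fun ((hasMFDerivAt_id (I := I) (1 : G)).prodMk (hasMFDerivAt_id 1)).mfderiv v
  rw [show (fun g : G => g * g) = (fun p : G × G => p.1 * p.2) ∘ fun g => (g, g) from rfl,
    mfderiv_comp (f := fun g : G => (g, g)) _ hmul hdiag, ContinuousLinearMap.comp_apply,
    hdiag_apply]
  -- `erw`: the tangent space of `G × G` at `(1, 1)` is `E × E` only up to unfolding.
  erw [mfderiv_prod_eq_add_apply hmul]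
  rw [show (fun z : G => z * 1) = id from funext mul_one,
    show (fun z : G => 1 * z) = id from funext one_mul, mfderiv_id]
  exact (two_smul ℝ v).symm

theorem eventually_mul_norm_extChartAt_mul_self_sub_le {k : ℝ} (hk : k < 2) :
    ∀ᶠ g in 𝓝 (1 : G), k * ‖extChartAt I (1 : G) g - extChartAt I (1 : G) 1‖ ≤
      ‖extChartAt I (1 : G) (g * g) - extChartAt I (1 : G) 1‖ := by
  have hsq : MDifferentiableAt I I (fun g : G => g * g) 1 :=
    (contMDiff_id.mul contMDiff_id : ContMDiff I I 1 fun g : G => g * g).mdifferentiable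
      one_ne_zero 1
  have hchart : HasFDerivWithinAt (writtenInExtChartAt I I 1 fun g : G => g * g)
      ((2 : ℝ) • ContinuousLinearMap.id ℝ E) (range I) (extChartAt I (1 : G) 1) := by
    have h := hsq.hasMFDerivAt.2
    rw [mfderiv_mul_self_one] at h
    exact h
  have hexpand := hchart.eventually_mul_norm_sub_le (fun v => by simp [norm_smul]) hk
  filter_upwards [(map_extChartAt_nhds (I := I) (1 : G)).le hexpand,
    extChartAt_source_mem_nhds (I := I) (1 : G)] with g hg hsrc
  simp only [mem_preimage, mem_ofPred_eq, writtenInExtChartAt, Function.comp_apply, mul_one,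
    (extChartAt I (1 : G)).left_inv hsrc,
    (extChartAt I (1 : G)).left_inv (mem_extChartAt_source 1)] at hg
  exact hg

end

theorem lie_group_no_small_subgroups_general
    {E : Type*} [NormedAddCommGroup E] [NormedSpace ℝ E]
    {H : Type*} [TopologicalSpace H] (I : ModelWithCorners ℝ E H)
    (G : Type*) [TopologicalSpace G] [ChartedSpace H G] [Group G] [LieGroup I (⊤ : ℕ∞) G] :
    ∃ U ∈ nhds (1 : G), ∀ K : Subgroup G, (K : Set G) ⊆ U → K = ⊥ := by
  set e := extChartAt I (1 : G)
  set φ : G → ℝ := fun g => ‖e g - e 1‖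
  refine ⟨{g | (3 / 2) * φ g ≤ φ (g * g)} ∩ (e.source ∩ e ⁻¹' ball (e 1) 1), ?_, ?_⟩
  · exact inter_mem (eventually_mul_norm_extChartAt_mul_self_sub_le (by norm_num))
      (inter_mem (extChartAt_source_mem_nhds 1)
        ((continuousAt_extChartAt 1).preimage_mem_nhds (ball_mem_nhds _ one_pos)))
  intro K hK
  refine (Subgroup.eq_bot_iff_forall K).2 fun g hg => ?_
  have hpow : ∀ n : ℕ, g ^ 2 ^ n ∈ _ := fun n => hK (K.pow_mem hg _)
  have hφ : φ g ≤ 0 := le_zero_of_forall_pow_two_pow_mem (by norm_num : (1 : ℝ) < 3 / 2)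
    (fun x hx => (mem_ball_iff_norm.1 hx.2.2).le) (fun x hx => hx.1) hpow
  have he : e g = e 1 := sub_eq_zero.1 (norm_le_zero_iff.1 hφ)
  exact e.injOn (hK hg).2.1 (mem_extChartAt_source 1) he

/-- Every (finite-dimensional real) Lie group has no small subgroups: there exists a
neighborhood `U` of the identity such that the only subgroup contained in `U` is trivial. -/
theorem lie_group_no_small_subgroups
    {E : Type*} [NormedAddCommGroup E] [NormedSpace ℝ E] [FiniteDimensional ℝ E]
    {H : Type*} [TopologicalSpace H] (I : ModelWithCorners ℝ E H)
    (G : Type*) [TopologicalSpace G] [ChartedSpace H G] [Group G] [LieGroup I (⊤ : ℕ∞) G] :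
    ∃ U ∈ nhds (1 : G), ∀ K : Subgroup G, (K : Set G) ⊆ U → K = ⊥ :=
  lie_group_no_small_subgroups_general I G
end

section
/- The braid group B_n on n strands is torsion-free: its only element of finite order is the identity. -/
/-!
Garside theory. In the positive braid monoid, two words beginning with letters `i` and `j` can
only be equivalent if both continue through the least common multiple of `i` and `j` (Garside's
key lemma). This makes the monoid cancellative, and any two elements with a common multiple have
a least one. Every element divides a power of the half twist `Δ`, so common right multiples, and
by reversing words common left multiples, always exist. By Ore's theorem the monoid then embeds
in the braid group, and `a ≤ b ↔ a⁻¹ * b` positive is a left-invariant partial order on the group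
in which any two elements have a supremum: translate them into the positive monoid by a common
lower bound and take their lcm there. If `x` has finite order, the finite subgroup generated by
`x` has a supremum `y`; left multiplication by `x` is an order automorphism permuting that
subgroup, so `x * y = y` and `x = 1`.
-/


/-- The braid relations on `n` generators `σ_0, …, σ_{n-1}`:
commutation `σ_i σ_j = σ_j σ_i` for `|i - j| ≥ 2` and the braid relation
`σ_i σ_{i+1} σ_i = σ_{i+1} σ_i σ_{i+1}`. -/
def braidRels (n : ℕ) : Set (FreeGroup (Fin n)) :=
  {r | ∃ i j : Fin n, (i : ℕ) + 2 ≤ (j : ℕ) ∧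
      r = FreeGroup.of i * FreeGroup.of j * (FreeGroup.of j * FreeGroup.of i)⁻¹} ∪
  {r | ∃ i j : Fin n, (i : ℕ) + 1 = (j : ℕ) ∧
      r = FreeGroup.of i * FreeGroup.of j * FreeGroup.of i *
        (FreeGroup.of j * FreeGroup.of i * FreeGroup.of j)⁻¹}

/-- The braid group `B_n` on `n` strands, presented with generators `σ_1, …, σ_{n-1}`. -/
def BraidGroup (n : ℕ) : Type := PresentedGroup (braidRels (n - 1))

instance (n : ℕ) : Group (BraidGroup n) := by
  unfold BraidGroup; infer_instance

/-- Old Mathlib definition (removed upstream): a monoid is torsion-free if no non-identity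
element has finite order. -/
def Monoid.IsTorsionFree (G : Type*) [Monoid G] : Prop :=
  ∀ g : G, g ≠ 1 → ¬IsOfFinOrder g

def IsLcm {M : Type*} [Monoid M] (a b l : M) : Prop :=
  a ∣ l ∧ b ∣ l ∧ ∀ c, a ∣ c → b ∣ c → l ∣ c

theorem mul_dvd_mul_iff_left_of_cancel {M : Type*} [Monoid M] [IsLeftCancelMul M] {a b c : M} :
    a * b ∣ a * c ↔ b ∣ c :=
  ⟨fun ⟨d, h⟩ => ⟨d, mul_left_cancel (h.trans (mul_assoc a b d))⟩, mul_dvd_mul_left a⟩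

theorem OreLocalization.numeratorHom_injective {R : Type*} [Monoid R] [IsLeftCancelMul R]
    {S : Submonoid R} [OreSet S] :
    Function.Injective (numeratorHom : R →* OreLocalization S R) := by
  intro a b h
  obtain ⟨u, v, huv, hu⟩ := oreDiv_eq_iff.1 h
  simp only [OneMemClass.coe_one, mul_one] at hu
  rw [Submonoid.smul_def, smul_eq_mul, smul_eq_mul, hu] at huv
  exact (mul_left_cancel huv).symm

abbrev Submonoid.leftOrder {G : Type*} [Group G] (P : Submonoid G)
    (hP : ∀ a ∈ P, a⁻¹ ∈ P → a = 1) : PartialOrder G where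
  le a b := a⁻¹ * b ∈ P
  le_refl a := by simp [P.one_mem]
  le_trans a b c hab hbc := by simpa [mul_assoc] using P.mul_mem hab hbc
  le_antisymm a b hab hba := inv_mul_eq_one.1 (hP _ hab (by simpa using hba))

theorem Set.Finite.exists_isLUB {α : Type*} [PartialOrder α] (h : ∀ a b : α, ∃ c, IsLUB {a, b} c)
    {s : Set α} (hs : s.Finite) (hne : s.Nonempty) : ∃ c, IsLUB s c := by
  let _ : SemilatticeSup α :=
    { ‹PartialOrder α› with
      sup := fun a b => (h a b).choose
      le_sup_left := fun a b => (h a b).choose_spec.1 (Set.mem_insert a {b})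
      le_sup_right := fun a b => (h a b).choose_spec.1 (Set.mem_insert_of_mem a rfl)
      sup_le := fun a b _ hac hbc => (h a b).choose_spec.2 fun _ hx => by
        rcases hx with rfl | rfl <;> assumption }
  obtain ⟨t, rfl⟩ := hs.exists_finset_coe
  exact ⟨_, Finset.isLUB_sup' (by simpa using hne)⟩

section LeftOrderedGroup

variable {G : Type*} [Group G] [PartialOrder G] [MulLeftMono G]

theorem exists_isLUB_pair_of_one_le [IsCodirectedOrder G]
    (h : ∀ a b : G, 1 ≤ a → 1 ≤ b → ∃ c, IsLUB {a, b} c) (a b : G) : ∃ c, IsLUB {a, b} c := by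
  obtain ⟨d, hda, hdb⟩ := exists_le_le a b
  obtain ⟨c, hc⟩ := h (d⁻¹ * a) (d⁻¹ * b) (le_inv_mul_iff_mul_le.2 (by simpa))
    (le_inv_mul_iff_mul_le.2 (by simpa))
  refine ⟨d * c, ?_⟩
  simpa [Set.image_pair] using (OrderIso.mulLeft d).isLUB_image'.2 hc

theorem eq_one_of_isLUB_zpowers {x y : G} (h : IsLUB (Subgroup.zpowers x : Set G) y) : x = 1 := by
  have hx : (x * ·) '' (Subgroup.zpowers x : Set G) = Subgroup.zpowers x := by
    ext g
    simp [Set.image_mul_left,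
      (Subgroup.zpowers x).mul_mem_cancel_left (Subgroup.inv_mem _ (Subgroup.mem_zpowers x))]
  have hxy : IsLUB ((x * ·) '' (Subgroup.zpowers x : Set G)) (x * y) :=
    (OrderIso.mulLeft x).isLUB_image'.2 h
  rw [hx] at hxy
  simpa using hxy.unique h

theorem eq_one_of_isOfFinOrder (h : ∀ a b : G, ∃ c, IsLUB {a, b} c) {x : G}
    (hx : IsOfFinOrder x) : x = 1 :=
  let ⟨_, hy⟩ := hx.finite_zpowers.exists_isLUB h ⟨1, Subgroup.one_mem _⟩
  eq_one_of_isLUB_zpowers hy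

end LeftOrderedGroup

-- Letters are natural numbers rather than elements of `Fin m` so that words can be shifted.
namespace BraidWord

def Far (i j : ℕ) : Prop := i + 2 ≤ j ∨ j + 2 ≤ i

def Adj (i j : ℕ) : Prop := i + 1 = j ∨ j + 1 = i

theorem Far.symm {i j : ℕ} (h : Far i j) : Far j i := Or.symm h

theorem Adj.symm {i j : ℕ} (h : Adj i j) : Adj j i := Or.symm h

theorem eq_or_adj_or_far (i j : ℕ) : i = j ∨ Adj i j ∨ Far i j := by
  unfold Adj Far; omega

inductive Step : List ℕ → List ℕ → Prop
  | comm (a b : List ℕ) {i j : ℕ} (h : Far i j) : Step (a ++ i :: j :: b) (a ++ j :: i :: b)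
  | braid (a b : List ℕ) {i j : ℕ} (h : Adj i j) :
      Step (a ++ i :: j :: i :: b) (a ++ j :: i :: j :: b)

def Eqv : List ℕ → List ℕ → Prop := Relation.ReflTransGen Step

local infix:50 " ≋ " => Eqv

variable {i j k : ℕ} {u v w x y : List ℕ}

namespace Step

theorem symm : Step u v → Step v u
  | comm a b h => comm a b h.symm
  | braid a b h => braid a b h.symm

theorem append (h : Step u v) (a b : List ℕ) : Step (a ++ u ++ b) (a ++ v ++ b) := by
  cases h with
  | comm c d h => simpa using comm (a ++ c) (d ++ b) h
  | braid c d h => simpa using braid (a ++ c) (d ++ b) h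

theorem reverse (h : Step u v) : Step u.reverse v.reverse := by
  cases h with
  | comm a b h => simpa using comm b.reverse a.reverse h.symm
  | braid a b h => simpa using braid b.reverse a.reverse h

theorem map_succ (h : Step u v) : Step (u.map (· + 1)) (v.map (· + 1)) := by
  cases h with
  | comm a b h => simpa using comm (a.map (· + 1)) (b.map (· + 1)) (by unfold Far at *; omega)
  | braid a b h => simpa using braid (a.map (· + 1)) (b.map (· + 1)) (by unfold Adj at *; omega)

theorem length_eq (h : Step u v) : u.length = v.length := by
  cases h <;> simp

theorem mem_iff (h : Step u v) : k ∈ u ↔ k ∈ v := by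
  cases h <;> simp <;> tauto

end Step

namespace Eqv

@[refl] theorem refl (u : List ℕ) : u ≋ u := Relation.ReflTransGen.refl

theorem trans : u ≋ v → v ≋ w → u ≋ w := Relation.ReflTransGen.trans

instance : Trans Eqv Eqv Eqv := ⟨trans⟩

theorem symm (h : u ≋ v) : v ≋ u := by
  induction h with
  | refl => rfl
  | tail _ s ih => exact (Relation.ReflTransGen.single s.symm).trans ih

theorem map {f : List ℕ → List ℕ} (hf : ∀ u v, Step u v → Step (f u) (f v)) (h : u ≋ v) :
    f u ≋ f v :=
  Relation.ReflTransGen.lift f hf _ _ h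

theorem append_left (a : List ℕ) (h : u ≋ v) : a ++ u ≋ a ++ v :=
  h.map fun _ _ s => by simpa using s.append a []

theorem append_right (h : u ≋ v) (b : List ℕ) : u ++ b ≋ v ++ b :=
  h.map fun _ _ s => by simpa using s.append [] b

theorem cons (i : ℕ) (h : u ≋ v) : i :: u ≋ i :: v := h.append_left [i]

theorem append (h : u ≋ v) (h' : x ≋ y) : u ++ x ≋ v ++ y :=
  (h.append_right x).trans (h'.append_left v)

theorem reverse (h : u ≋ v) : u.reverse ≋ v.reverse := h.map fun _ _ => Step.reverse

theorem map_succ (h : u ≋ v) : u.map (· + 1) ≋ v.map (· + 1) := h.map fun _ _ => Step.map_succ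

theorem length_eq (h : u ≋ v) : u.length = v.length := by
  induction h with
  | refl => rfl
  | tail _ s ih => exact ih.trans s.length_eq

theorem mem_iff (h : u ≋ v) : k ∈ u ↔ k ∈ v := by
  induction h with
  | refl => rfl
  | tail _ s ih => exact ih.trans s.mem_iff

end Eqv

theorem eqv_swap (h : Far i j) (b : List ℕ) : i :: j :: b ≋ j :: i :: b :=
  Relation.ReflTransGen.single (Step.comm [] b h)

theorem eqv_braid (h : Adj i j) (b : List ℕ) : i :: j :: i :: b ≋ j :: i :: j :: b :=
  Relation.ReflTransGen.single (Step.braid [] b h)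

theorem cons_eqv_append_of_far : (∀ x ∈ w, Far k x) → k :: w ≋ w ++ [k] := by
  induction w with
  | nil => exact fun _ => .refl _
  | cons x w ih =>
    intro h
    simp only [List.mem_cons, forall_eq_or_imp] at h
    exact (eqv_swap h.1 w).trans ((ih h.2).cons x)

/-- The word `c` such that `i :: c` is the least common multiple of the letters `i` and `j`. -/
def complement (i j : ℕ) : List ℕ :=
  if i = j then [] else if i + 1 = j ∨ j + 1 = i then [j, i] else [j]

theorem complement_self (i : ℕ) : complement i i = [] := if_pos rfl

theorem complement_of_adj (h : Adj i j) : complement i j = [j, i] := by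
  unfold Adj at h
  rw [complement, if_neg (by omega), if_pos h]

theorem complement_of_far (h : Far i j) : complement i j = [j] := by
  unfold Far at h
  rw [complement, if_neg (by omega), if_neg (by omega)]

theorem length_complement_comm (i j : ℕ) :
    (complement i j).length = (complement j i).length := by
  unfold complement; split_ifs <;> simp_all

theorem mem_complement (h : k ∈ complement i j) : k = i ∨ k = j := by
  unfold complement at h; split_ifs at h <;> simp_all; tauto

theorem cons_complement_eqv (i j : ℕ) : i :: complement i j ≋ j :: complement j i := by
  rcases eq_or_adj_or_far i j with rfl | h | h
  · rfl
  · rw [complement_of_adj h, complement_of_adj h.symm]; exact eqv_braid h []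
  · rw [complement_of_far h, complement_of_far h.symm]; exact eqv_swap h []

/-- `i :: u` and `j :: v` are both equivalent to the least common multiple of `i` and `j`
followed by one common word. -/
def FactorsThroughLcm (i : ℕ) (u : List ℕ) (j : ℕ) (v : List ℕ) : Prop :=
  ∃ w, u ≋ complement i j ++ w ∧ v ≋ complement j i ++ w

theorem factorsThroughLcm_iff_of_far (h : Far i j) :
    FactorsThroughLcm i u j v ↔ ∃ w, u ≋ j :: w ∧ v ≋ i :: w := by
  rw [FactorsThroughLcm, complement_of_far h, complement_of_far h.symm]; rfl

theorem factorsThroughLcm_iff_of_adj (h : Adj i j) :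
    FactorsThroughLcm i u j v ↔ ∃ w, u ≋ j :: i :: w ∧ v ≋ i :: j :: w := by
  rw [FactorsThroughLcm, complement_of_adj h, complement_of_adj h.symm]; rfl

namespace FactorsThroughLcm

theorem symm (h : FactorsThroughLcm i u j v) : FactorsThroughLcm j v i u :=
  let ⟨w, hu, hv⟩ := h; ⟨w, hv, hu⟩

theorem of_eqv (h : u ≋ v) : FactorsThroughLcm i u i v :=
  ⟨v, by rw [complement_self]; exact h, by rw [complement_self]; rfl⟩

theorem eqv (h : FactorsThroughLcm i u i v) : u ≋ v := by
  obtain ⟨w, hu, hv⟩ := h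
  rw [complement_self] at hu hv
  exact hu.trans hv.symm

theorem of_eqv_left (e : u ≋ x) (h : FactorsThroughLcm i x j v) : FactorsThroughLcm i u j v :=
  let ⟨w, hx, hv⟩ := h; ⟨w, e.trans hx, hv⟩

theorem length_eq (h : FactorsThroughLcm i u j v) : u.length = v.length := by
  obtain ⟨w, hu, hv⟩ := h
  rw [hu.length_eq, hv.length_eq, List.length_append, List.length_append,
    length_complement_comm]

end FactorsThroughLcm

theorem Step.factorsThroughLcm (h : Step (i :: u) (k :: x)) : FactorsThroughLcm i u k x := by
  suffices ∀ s t, Step s t → s = i :: u → t = k :: x → FactorsThroughLcm i u k x from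
    this _ _ h rfl rfl
  rintro _ _ (⟨_ | ⟨c, a⟩, b, hf⟩ | ⟨_ | ⟨c, a⟩, b, hf⟩) hs ht <;>
    simp only [List.nil_append, List.cons_append, List.cons.injEq] at hs ht <;>
    obtain ⟨rfl, rfl⟩ := hs <;> obtain ⟨rfl, rfl⟩ := ht
  · exact (factorsThroughLcm_iff_of_far hf).2 ⟨b, .refl _, .refl _⟩
  · exact .of_eqv (.single (.comm a b hf))
  · exact (factorsThroughLcm_iff_of_adj hf).2 ⟨b, .refl _, .refl _⟩
  · exact .of_eqv (.single (.braid a b hf))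

def KeyLemmaBelow (n : ℕ) : Prop :=
  ∀ ⦃i j : ℕ⦄ ⦃u v : List ℕ⦄, u.length < n → i :: u ≋ j :: v → FactorsThroughLcm i u j v

theorem KeyLemmaBelow.eqv_of_cons {n : ℕ} (ih : KeyLemmaBelow n) (hu : u.length < n)
    (h : i :: u ≋ i :: v) : u ≋ v :=
  (ih hu h).eqv

namespace FactorsThroughLcm

theorem trans_far_far (ih : KeyLemmaBelow u.length) (hik : Far i k) (hkj : Far k j)
    (h₁ : FactorsThroughLcm i u k x) (h₂ : FactorsThroughLcm k x j v) :
    FactorsThroughLcm i u j v := by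
  obtain ⟨w₁, hu, hx₁⟩ := (factorsThroughLcm_iff_of_far hik).1 h₁
  obtain ⟨w₂, hx₂, hv⟩ := (factorsThroughLcm_iff_of_far hkj).1 h₂
  obtain ⟨t, ht₁, ht₂⟩ := ih (by simp [hu.length_eq]) (hx₁.symm.trans hx₂)
  have commute {a b : ℕ} (ha : Far k a) (hb : Far k b) :
      k :: (complement a b ++ t) ≋ complement a b ++ k :: t := by
    simpa using (cons_eqv_append_of_far fun x hx =>
      (mem_complement hx).elim (· ▸ ha) (· ▸ hb)).append_right t
  exact ⟨k :: t, hu.trans ((ht₁.cons k).trans (commute hik.symm hkj)),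
    hv.trans ((ht₂.cons k).trans (commute hkj hik.symm))⟩

theorem trans_far_adj (ih : KeyLemmaBelow u.length) (hik : Far i k) (hkj : Adj k j)
    (h₁ : FactorsThroughLcm i u k x) (h₂ : FactorsThroughLcm k x j v) :
    FactorsThroughLcm i u j v := by
  obtain ⟨w₁, hu, hx₁⟩ := (factorsThroughLcm_iff_of_far hik).1 h₁
  obtain ⟨w₂, hx₂, hv⟩ := (factorsThroughLcm_iff_of_adj hkj).1 h₂
  have l₁ := hu.length_eq
  have l₂ := (hx₁.symm.trans hx₂).length_eq
  simp only [List.length_cons] at l₁ l₂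
  have h₃ := ih (by grind) (hx₁.symm.trans hx₂)
  rcases eq_or_adj_or_far i j with rfl | hij | hij
  · unfold Far Adj at *; omega
  · obtain ⟨t, ht₁, ht₂⟩ := (factorsThroughLcm_iff_of_adj hij).1 h₃
    have l₃ := ht₁.length_eq
    simp only [List.length_cons] at l₃
    obtain ⟨s, hs₁, hs₂⟩ := (factorsThroughLcm_iff_of_far hik.symm).1 (ih (by grind) ht₂)
    obtain ⟨p, hp₁, hp₂⟩ := (factorsThroughLcm_iff_of_adj hkj.symm).1 (ih (by grind) hs₂)
    refine (factorsThroughLcm_iff_of_adj hij).2 ⟨k :: j :: i :: p, ?_, ?_⟩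
    · calc u ≋ k :: j :: i :: k :: j :: p := hu.trans ((ht₁.trans ((hp₁.cons i).cons j)).cons k)
        _ ≋ k :: j :: k :: i :: j :: p := ((eqv_swap hik _).cons j).cons k
        _ ≋ j :: k :: j :: i :: j :: p := eqv_braid hkj _
        _ ≋ j :: k :: i :: j :: i :: p := ((eqv_braid hij.symm _).cons k).cons j
        _ ≋ j :: i :: k :: j :: i :: p := (eqv_swap hik.symm _).cons j
    · calc v ≋ k :: j :: i :: j :: k :: p := hv.trans (((hs₁.trans (hp₂.cons i)).cons j).cons k)
        _ ≋ k :: i :: j :: i :: k :: p := (eqv_braid hij.symm _).cons k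
        _ ≋ i :: k :: j :: i :: k :: p := eqv_swap hik.symm _
        _ ≋ i :: k :: j :: k :: i :: p := (((eqv_swap hik _).cons j).cons k).cons i
        _ ≋ i :: j :: k :: j :: i :: p := (eqv_braid hkj _).cons i
  · obtain ⟨t, ht₁, ht₂⟩ := (factorsThroughLcm_iff_of_far hij).1 h₃
    obtain ⟨s, hs₁, hs₂⟩ := (factorsThroughLcm_iff_of_far hik.symm).1 (ih (by grind) ht₂)
    refine (factorsThroughLcm_iff_of_far hij).2 ⟨k :: j :: s, ?_, ?_⟩
    · calc u ≋ k :: j :: k :: s := hu.trans ((ht₁.trans (hs₂.cons j)).cons k)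
        _ ≋ j :: k :: j :: s := eqv_braid hkj _
    · calc v ≋ k :: j :: i :: s := hv.trans ((hs₁.cons j).cons k)
        _ ≋ k :: i :: j :: s := (eqv_swap hij.symm _).cons k
        _ ≋ i :: k :: j :: s := eqv_swap hik.symm _

theorem trans_adj_adj (ih : KeyLemmaBelow u.length) (hik : Adj i k) (hkj : Adj k j)
    (h₁ : FactorsThroughLcm i u k x) (h₂ : FactorsThroughLcm k x j v) :
    FactorsThroughLcm i u j v := by
  obtain ⟨w₁, hu, hx₁⟩ := (factorsThroughLcm_iff_of_adj hik).1 h₁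
  obtain ⟨w₂, hx₂, hv⟩ := (factorsThroughLcm_iff_of_adj hkj).1 h₂
  have l₁ := hu.length_eq
  have l₂ := (hx₁.symm.trans hx₂).length_eq
  simp only [List.length_cons] at l₁ l₂
  rcases eq_or_adj_or_far i j with rfl | hij | hij
  · have hw : w₁ ≋ w₂ :=
      ih.eqv_of_cons (by grind) (ih.eqv_of_cons (by grind) (hx₁.symm.trans hx₂))
    exact of_eqv (hu.trans (((hw.cons i).cons k).trans hv.symm))
  · unfold Adj at *; omega
  obtain ⟨t, ht₁, ht₂⟩ :=
    (factorsThroughLcm_iff_of_far hij).1 (ih (by grind) (hx₁.symm.trans hx₂))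
  have l₃ := ht₁.length_eq
  simp only [List.length_cons] at l₃
  obtain ⟨s, hs₁, hs₂⟩ := (factorsThroughLcm_iff_of_adj hkj).1 (ih (by grind) ht₁)
  obtain ⟨p, hp₁, hp₂⟩ :=
    (factorsThroughLcm_iff_of_adj hik.symm).1 (ih (by grind) (ht₂.trans (hs₂.cons i)))
  have l₄ := hs₂.length_eq
  simp only [List.length_cons] at l₄
  obtain ⟨y, hy₁, hy₂⟩ :=
    (factorsThroughLcm_iff_of_far hij.symm).1 (ih (by grind) (ih.eqv_of_cons (by grind) hp₂))
  refine (factorsThroughLcm_iff_of_far hij).2 ⟨k :: i :: j :: k :: y, ?_, ?_⟩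
  · calc u ≋ k :: i :: j :: k :: i :: y :=
          hu.trans (((hs₁.trans ((hy₁.cons k).cons j)).cons i).cons k)
      _ ≋ k :: j :: i :: k :: i :: y := (eqv_swap hij _).cons k
      _ ≋ k :: j :: k :: i :: k :: y := ((eqv_braid hik y).cons j).cons k
      _ ≋ j :: k :: j :: i :: k :: y := eqv_braid hkj _
      _ ≋ j :: k :: i :: j :: k :: y := ((eqv_swap hij.symm _).cons k).cons j
  · calc v ≋ k :: j :: i :: k :: j :: y :=
          hv.trans (((hp₁.trans ((hy₂.cons k).cons i)).cons j).cons k)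
      _ ≋ k :: i :: j :: k :: j :: y := (eqv_swap hij.symm _).cons k
      _ ≋ k :: i :: k :: j :: k :: y := ((eqv_braid hkj.symm y).cons i).cons k
      _ ≋ i :: k :: i :: j :: k :: y := eqv_braid hik.symm _

theorem trans (ih : KeyLemmaBelow u.length) (h₁ : FactorsThroughLcm i u k x)
    (h₂ : FactorsThroughLcm k x j v) : FactorsThroughLcm i u j v := by
  rcases eq_or_adj_or_far i k with rfl | hik | hik
  · exact h₂.of_eqv_left h₁.eqv
  all_goals rcases eq_or_adj_or_far k j with rfl | hkj | hkj
  · exact (h₁.symm.of_eqv_left h₂.eqv.symm).symm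
  · exact trans_adj_adj ih hik hkj h₁ h₂
  · have hv : v.length = u.length := (h₁.length_eq.trans h₂.length_eq).symm
    exact (trans_far_adj (hv ▸ ih) hkj.symm hik.symm h₂.symm h₁.symm).symm
  · exact (h₁.symm.of_eqv_left h₂.eqv.symm).symm
  · exact trans_far_adj ih hik hkj h₁ h₂
  · exact trans_far_far ih hik hkj h₁ h₂

end FactorsThroughLcm

theorem KeyLemmaBelow.factorsThroughLcm (ih : KeyLemmaBelow u.length) (h : i :: u ≋ j :: v) :
    FactorsThroughLcm i u j v := by
  suffices ∀ s, s ≋ j :: v → ∀ {i x}, s = i :: x → x.length = u.length →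
      FactorsThroughLcm i x j v from this _ h rfl rfl
  intro s hs
  induction hs using Relation.ReflTransGen.head_induction_on with
  | refl =>
    rintro i x h -
    cases h
    exact .of_eqv (.refl _)
  | @head a c s _ ihc =>
    rintro i x rfl hx
    rcases c with _ | ⟨k, y⟩
    · exact absurd s.length_eq (by simp)
    exact s.factorsThroughLcm.trans (hx ▸ ih) (ihc rfl (by simpa [hx] using s.length_eq.symm))

/-- Garside's key lemma. -/
theorem Eqv.factorsThroughLcm (h : i :: u ≋ j :: v) : FactorsThroughLcm i u j v := by
  induction hn : u.length using Nat.strong_induction_on generalizing i j u v with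
  | _ n ih =>
    exact KeyLemmaBelow.factorsThroughLcm (fun _ _ _ _ hu h => ih _ (hn ▸ hu) h rfl) h

theorem Eqv.of_cons (h : i :: u ≋ i :: v) : u ≋ v := h.factorsThroughLcm.eqv

theorem Eqv.of_append_left {a : List ℕ} (h : a ++ u ≋ a ++ v) : u ≋ v := by
  induction a with
  | nil => exact h
  | cons i a ih => exact ih h.of_cons

def desc (m : ℕ) : List ℕ := (List.range m).reverse

theorem mem_desc {m : ℕ} : k ∈ desc m ↔ k < m := by simp [desc]

theorem desc_succ (m : ℕ) : desc (m + 1) = m :: desc m := by simp [desc, List.range_succ]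

theorem desc_succ' (m : ℕ) : desc (m + 1) = (desc m).map (· + 1) ++ [0] := by
  simp [desc, List.range_succ_eq_map, List.map_reverse]

theorem range_succ' (m : ℕ) : List.range (m + 1) = 0 :: (List.range m).map (· + 1) :=
  List.range_succ_eq_map

/-- The Garside element `Δ`, the positive half twist, in the letters `0, …, m - 1`. -/
def delta : ℕ → List ℕ
  | 0 => []
  | m + 1 => List.range (m + 1) ++ delta m

theorem lt_of_mem_delta {m : ℕ} (h : k ∈ delta m) : k < m := by
  induction m with
  | zero => simp [delta] at h
  | succ m ih =>
    rcases List.mem_append.1 h with h | h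
    · exact List.mem_range.1 h
    · exact (ih h).trans m.lt_succ_self

theorem cons_desc_eqv {a m : ℕ} (h : a + 2 ≤ m) : a :: desc m ≋ desc m ++ [a + 1] := by
  induction m with
  | zero => omega
  | succ m ih =>
    rw [desc_succ]
    rcases (show a + 2 ≤ m ∨ m = a + 1 by omega) with h | rfl
    · exact (eqv_swap (by unfold Far; omega) _).trans ((ih h).cons m)
    · rw [desc_succ]
      calc a :: (a + 1) :: a :: desc a ≋ (a + 1) :: a :: (a + 1) :: desc a :=
            eqv_braid (.inl rfl) _
        _ ≋ (a + 1) :: a :: (desc a ++ [a + 1]) :=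
            ((cons_eqv_append_of_far fun x hx =>
              .inr (by have := mem_desc.1 hx; omega)).cons a).cons _

theorem range_append_eqv {a m : ℕ} (h : a + 2 ≤ m) :
    List.range m ++ [a] ≋ (a + 1) :: List.range m := by
  simpa [desc] using (cons_desc_eqv h).reverse

theorem delta_succ_eqv (m : ℕ) : delta (m + 1) ≋ delta m ++ desc (m + 1) := by
  induction m with
  | zero => rfl
  | succ m ih =>
    have hc : (m + 1) :: delta m ≋ delta m ++ [m + 1] :=
      cons_eqv_append_of_far fun x hx => .inr (by have := lt_of_mem_delta hx; omega)
    calc delta (m + 1 + 1) ≋ List.range (m + 2) ++ (delta m ++ desc (m + 1)) := ih.append_left _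
      _ = List.range (m + 1) ++ ((m + 1) :: delta m) ++ desc (m + 1) := by simp [List.range_succ]
      _ ≋ List.range (m + 1) ++ (delta m ++ [m + 1]) ++ desc (m + 1) :=
          (hc.append_left _).append_right _
      _ = delta (m + 1) ++ desc (m + 1 + 1) := by simp [delta, desc_succ]

theorem range_append_desc_eqv (m : ℕ) :
    List.range (m + 1) ++ desc m ≋ desc (m + 1) ++ (List.range m).map (· + 1) := by
  induction m with
  | zero => rfl
  | succ m ih =>
    have far_zero : ∀ {l : List ℕ}, ∀ x ∈ (l.map (· + 1)).map (· + 1), Far 0 x := by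
      intro l x hx; simp only [List.map_map, List.mem_map] at hx
      obtain ⟨y, -, rfl⟩ := hx; exact .inl (by simp)
    calc List.range (m + 2) ++ desc (m + 1)
        = 0 :: ((List.range (m + 1) ++ desc m).map (· + 1) ++ [0]) := by
          simp [range_succ' (m + 1), desc_succ']
      _ ≋ 0 :: ((desc (m + 1) ++ (List.range m).map (· + 1)).map (· + 1) ++ [0]) :=
          (ih.map_succ.append_right _).cons 0
      _ = (0 :: ((desc m).map (· + 1)).map (· + 1)) ++
            1 :: (((List.range m).map (· + 1)).map (· + 1) ++ [0]) := by simp [desc_succ']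
      _ ≋ (((desc m).map (· + 1)).map (· + 1) ++ [0]) ++
            1 :: 0 :: ((List.range m).map (· + 1)).map (· + 1) :=
          (cons_eqv_append_of_far far_zero).append ((cons_eqv_append_of_far far_zero).symm.cons 1)
      _ = ((desc m).map (· + 1)).map (· + 1) ++
            0 :: 1 :: 0 :: ((List.range m).map (· + 1)).map (· + 1) := by simp
      _ ≋ ((desc m).map (· + 1)).map (· + 1) ++
            1 :: 0 :: 1 :: ((List.range m).map (· + 1)).map (· + 1) :=
          (eqv_braid (.inl rfl) _).append_left _
      _ = desc (m + 2) ++ (List.range (m + 1)).map (· + 1) := by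
          simp [desc_succ', range_succ' m]

theorem delta_succ_eqv' (m : ℕ) : delta (m + 1) ≋ desc (m + 1) ++ (delta m).map (· + 1) := by
  induction m with
  | zero => rfl
  | succ m ih =>
    calc delta (m + 1 + 1) ≋ List.range (m + 2) ++ (desc (m + 1) ++ (delta m).map (· + 1)) :=
          ih.append_left _
      _ = (List.range (m + 2) ++ desc (m + 1)) ++ (delta m).map (· + 1) := by simp
      _ ≋ (desc (m + 2) ++ (List.range (m + 1)).map (· + 1)) ++ (delta m).map (· + 1) :=
          (range_append_desc_eqv (m + 1)).append_right _
      _ = desc (m + 1 + 1) ++ (delta (m + 1)).map (· + 1) := by simp [delta]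

theorem exists_delta_eqv_cons {m : ℕ} (h : i < m) : ∃ e, delta m ≋ i :: e := by
  induction m with
  | zero => omega
  | succ m ih =>
    rcases (show i < m ∨ i = m by omega) with h | rfl
    · obtain ⟨e, he⟩ := ih h
      exact ⟨e ++ desc (m + 1), (delta_succ_eqv m).trans (he.append_right _)⟩
    · exact ⟨desc i ++ (delta i).map (· + 1), by simpa [desc_succ] using delta_succ_eqv' i⟩

theorem exists_cons_delta_eqv {m : ℕ} (h : i < m) : ∃ j < m, i :: delta m ≋ delta m ++ [j] := by
  induction m generalizing i with
  | zero => omega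
  | succ m ih =>
    rcases i with _ | a
    · rcases Nat.eq_zero_or_pos m with rfl | hm
      · exact ⟨0, by omega, by rfl⟩
      obtain ⟨j, hj, hq⟩ := ih hm
      refine ⟨j + 1, by omega, ?_⟩
      calc 0 :: delta (m + 1) ≋ (0 :: delta m) ++ desc (m + 1) := (delta_succ_eqv m).cons 0
        _ ≋ delta m ++ (j :: desc (m + 1)) := by simpa using hq.append_right (desc (m + 1))
        _ ≋ delta m ++ (desc (m + 1) ++ [j + 1]) := (cons_desc_eqv (by omega)).append_left _
        _ ≋ delta (m + 1) ++ [j + 1] := by simpa using (delta_succ_eqv m).symm.append_right [j + 1]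
    · obtain ⟨j, hj, hq⟩ := ih (i := a) (by omega)
      refine ⟨j, by omega, ?_⟩
      calc (a + 1) :: delta (m + 1) = ((a + 1) :: List.range (m + 1)) ++ delta m := rfl
        _ ≋ (List.range (m + 1) ++ [a]) ++ delta m :=
            (range_append_eqv (by omega)).symm.append_right _
        _ = List.range (m + 1) ++ (a :: delta m) := by simp
        _ ≋ List.range (m + 1) ++ (delta m ++ [j]) := hq.append_left _
        _ = delta (m + 1) ++ [j] := by simp [delta]

def braidCon (m : ℕ) : Con (FreeMonoid (Fin m)) where
  r u v := u.toList.map Fin.val ≋ v.toList.map Fin.val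
  iseqv := ⟨fun _ => .refl _, Eqv.symm, Eqv.trans⟩
  mul' h h' := by simpa using h.append h'

end BraidWord

theorem braidRels_comm {m : ℕ} {i j : Fin m} (h : (i : ℕ) + 2 ≤ j) :
    (PresentedGroup.of i : PresentedGroup (braidRels m)) * .of j = .of j * .of i := by
  have h' := PresentedGroup.mk_eq_mk_of_mul_inv_mem (rels := braidRels m)
    (x := .of i * .of j) (y := .of j * .of i) (Or.inl ⟨i, j, h, rfl⟩)
  simp only [map_mul] at h'
  exact h'

theorem braidRels_braid {m : ℕ} {i j : Fin m} (h : (i : ℕ) + 1 = j) :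
    (PresentedGroup.of i : PresentedGroup (braidRels m)) * .of j * .of i =
      .of j * .of i * .of j := by
  have h' := PresentedGroup.mk_eq_mk_of_mul_inv_mem (rels := braidRels m)
    (x := .of i * .of j * .of i) (y := .of j * .of i * .of j) (Or.inr ⟨i, j, h, rfl⟩)
  simp only [map_mul] at h'
  exact h'

/-- The positive braid monoid on `m + 1` strands, generated by `of i` for `i : Fin m`. -/
abbrev BraidMonoid (m : ℕ) : Type := (BraidWord.braidCon m).Quotient

namespace BraidMonoid

open BraidWord

local infix:50 " ≋ " => Eqv

variable {m : ℕ}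

def of (i : Fin m) : BraidMonoid m := ((FreeMonoid.of i : FreeMonoid (Fin m)) : BraidMonoid m)

/-- The element spelled by a word, with the letters `≥ m` dropped. -/
def ofWord (m : ℕ) (w : List ℕ) : BraidMonoid m :=
  ((FreeMonoid.ofList (w.filterMap fun x => if h : x < m then some ⟨x, h⟩ else none) :
    FreeMonoid (Fin m)) : BraidMonoid m)

theorem map_val_filterMap_of_lt {w : List ℕ} (hw : ∀ x ∈ w, x < m) :
    (w.filterMap fun x => if h : x < m then some (⟨x, h⟩ : Fin m) else none).map Fin.val = w := by
  induction w with
  | nil => rfl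
  | cons x w ih =>
    simp only [List.mem_cons, forall_eq_or_imp] at hw
    simp [hw.1, ih hw.2]

@[simp] theorem ofWord_nil : ofWord m [] = 1 := rfl

theorem ofWord_append (u v : List ℕ) : ofWord m (u ++ v) = ofWord m u * ofWord m v := by
  simp [ofWord, List.filterMap_append, ← Con.coe_mul]

theorem ofWord_cons {i : ℕ} (h : i < m) (w : List ℕ) :
    ofWord m (i :: w) = of ⟨i, h⟩ * ofWord m w := by
  rw [← List.singleton_append, ofWord_append]
  congr 1
  simp [ofWord, of, h]

theorem ofWord_eq_ofWord_iff {u v : List ℕ} (hu : ∀ x ∈ u, x < m) (hv : ∀ x ∈ v, x < m) :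
    ofWord m u = ofWord m v ↔ u ≋ v := by
  rw [ofWord, ofWord, Con.eq]
  change List.map _ (FreeMonoid.toList (FreeMonoid.ofList _)) ≋ List.map _ _ ↔ _
  rw [FreeMonoid.toList_ofList, FreeMonoid.toList_ofList, map_val_filterMap_of_lt hu,
    map_val_filterMap_of_lt hv]

theorem exists_ofWord (a : BraidMonoid m) : ∃ w, (∀ x ∈ w, x < m) ∧ ofWord m w = a := by
  induction a using Con.induction_on with
  | H u =>
    refine ⟨u.toList.map Fin.val, by simp, ?_⟩
    simp [ofWord, List.filterMap_map]

theorem induction_on {C : BraidMonoid m → Prop} (a : BraidMonoid m) (one : C 1)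
    (mul : ∀ i a, C a → C (of i * a)) : C a := by
  obtain ⟨w, hw, rfl⟩ := exists_ofWord a
  induction w with
  | nil => exact one
  | cons x w ih =>
    simp only [List.mem_cons, forall_eq_or_imp] at hw
    rw [ofWord_cons hw.1]
    exact mul _ _ (ih hw.2)

theorem eq_one_or_exists_eq_of_mul (a : BraidMonoid m) : a = 1 ∨ ∃ i b, a = of i * b := by
  induction a using induction_on with
  | one => exact .inl rfl
  | mul i b _ => exact .inr ⟨i, b, rfl⟩

def length (a : BraidMonoid m) : ℕ :=
  Con.liftOn a FreeMonoid.length fun _ _ h => by simpa [FreeMonoid.length] using h.length_eq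

theorem length_ofWord {w : List ℕ} (hw : ∀ x ∈ w, x < m) : length (ofWord m w) = w.length := by
  conv_rhs => rw [← map_val_filterMap_of_lt hw]
  simp [ofWord, length, FreeMonoid.length]

theorem length_mul (a b : BraidMonoid m) : length (a * b) = length a + length b := by
  induction a, b using Con.induction_on₂ with
  | H u v => exact FreeMonoid.length_mul u v

@[simp] theorem length_one : length (1 : BraidMonoid m) = 0 := rfl

@[simp] theorem length_of (i : Fin m) : length (of i) = 1 := rfl

theorem eq_one_of_length_eq_zero {a : BraidMonoid m} (h : length a = 0) : a = 1 := by
  obtain ⟨w, hw, rfl⟩ := exists_ofWord a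
  rw [length_ofWord hw, List.length_eq_zero_iff] at h
  rw [h, ofWord_nil]

theorem eq_one_of_mul_eq_one {a b : BraidMonoid m} (h : a * b = 1) : a = 1 :=
  eq_one_of_length_eq_zero <| by
    have := congrArg length h
    rw [length_mul, length_one] at this
    omega

instance : IsLeftCancelMul (BraidMonoid m) where
  mul_left_cancel a b c h := by
    beta_reduce at h
    obtain ⟨x, hx, rfl⟩ := exists_ofWord a
    obtain ⟨y, hy, rfl⟩ := exists_ofWord b
    obtain ⟨z, hz, rfl⟩ := exists_ofWord c
    rw [← ofWord_append, ← ofWord_append, ofWord_eq_ofWord_iff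
      (List.forall_mem_append.2 ⟨hx, hy⟩) (List.forall_mem_append.2 ⟨hx, hz⟩)] at h
    exact (ofWord_eq_ofWord_iff hy hz).2 h.of_append_left

def rev (a : BraidMonoid m) : BraidMonoid m :=
  Con.liftOn a (fun u => ofWord m (u.toList.map Fin.val).reverse) fun _ _ h =>
    (ofWord_eq_ofWord_iff (by simp) (by simp)).2 h.reverse

theorem rev_ofWord {w : List ℕ} (hw : ∀ x ∈ w, x < m) : rev (ofWord m w) = ofWord m w.reverse := by
  simp only [rev, ofWord, Con.liftOn_coe, FreeMonoid.toList_ofList]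
  rw [map_val_filterMap_of_lt hw]

theorem rev_mul (a b : BraidMonoid m) : rev (a * b) = rev b * rev a := by
  obtain ⟨x, hx, rfl⟩ := exists_ofWord a
  obtain ⟨y, hy, rfl⟩ := exists_ofWord b
  rw [← ofWord_append, rev_ofWord (List.forall_mem_append.2 ⟨hx, hy⟩), rev_ofWord hx,
    rev_ofWord hy, ← ofWord_append, List.reverse_append]

theorem rev_rev (a : BraidMonoid m) : rev (rev a) = a := by
  obtain ⟨x, hx, rfl⟩ := exists_ofWord a
  rw [rev_ofWord hx, rev_ofWord (by simpa using hx), List.reverse_reverse]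

instance : IsRightCancelMul (BraidMonoid m) where
  mul_right_cancel a b c h := by
    beta_reduce at h
    have : rev b = rev c := mul_left_cancel (a := rev a) (by rw [← rev_mul, ← rev_mul, h])
    rw [← rev_rev b, this, rev_rev]

theorem ofWord_singleton {i : ℕ} (h : i < m) : ofWord m [i] = of ⟨i, h⟩ := by
  rw [ofWord_cons h, ofWord_nil, mul_one]

theorem of_mul_of_comm {i j : Fin m} (h : (i : ℕ) + 2 ≤ j) : of i * of j = of j * of i := by
  rw [← ofWord_singleton i.2, ← ofWord_singleton j.2, ← ofWord_append, ← ofWord_append,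
    ofWord_eq_ofWord_iff (by simp) (by simp)]
  exact eqv_swap (.inl h) []

theorem of_mul_of_mul_of {i j : Fin m} (h : (i : ℕ) + 1 = j) :
    of i * of j * of i = of j * of i * of j := by
  rw [← ofWord_singleton i.2, ← ofWord_singleton j.2, ← ofWord_append, ← ofWord_append,
    ← ofWord_append, ← ofWord_append, ofWord_eq_ofWord_iff (by simp) (by simp)]
  exact eqv_braid (.inl h) []

theorem lt_of_mem_complement {i j : Fin m} : ∀ x ∈ complement i j, x < m := fun _ hx =>
  (mem_complement hx).elim (· ▸ i.2) (· ▸ j.2)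

theorem of_mul_complement (i j : Fin m) :
    of i * ofWord m (complement i j) = of j * ofWord m (complement j i) := by
  rw [← ofWord_cons i.2, ← ofWord_cons j.2, ofWord_eq_ofWord_iff]
  · exact cons_complement_eqv i j
  all_goals exact List.forall_mem_cons.2 ⟨Fin.is_lt _, lt_of_mem_complement⟩

theorem exists_eq_complement_mul {i j : Fin m} {a b : BraidMonoid m} (h : of i * a = of j * b) :
    ∃ w, a = ofWord m (complement i j) * w ∧ b = ofWord m (complement j i) * w := by
  obtain ⟨u, hu, rfl⟩ := exists_ofWord a
  obtain ⟨v, hv, rfl⟩ := exists_ofWord b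
  rw [← ofWord_cons i.2, ← ofWord_cons j.2,
    ofWord_eq_ofWord_iff (List.forall_mem_cons.2 ⟨i.2, hu⟩) (List.forall_mem_cons.2 ⟨j.2, hv⟩)] at h
  obtain ⟨w, hw₁, hw₂⟩ := h.factorsThroughLcm
  have hw : ∀ x ∈ w, x < m := fun x hx => hu x (hw₁.mem_iff.2 (List.mem_append_right _ hx))
  have hcw {a b : Fin m} : ∀ x ∈ complement a b ++ w, x < m :=
    List.forall_mem_append.2 ⟨lt_of_mem_complement, hw⟩
  refine ⟨ofWord m w, ?_, ?_⟩
  · rwa [← ofWord_append, ofWord_eq_ofWord_iff hu hcw]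
  · rwa [← ofWord_append, ofWord_eq_ofWord_iff hv hcw]

def delta (m : ℕ) : BraidMonoid m := ofWord m (BraidWord.delta m)

theorem of_dvd_delta (i : Fin m) : of i ∣ delta m := by
  obtain ⟨e, he⟩ := exists_delta_eqv_cons i.2
  have he' : ∀ x ∈ e, x < m := fun x hx =>
    lt_of_mem_delta (he.mem_iff.2 (List.mem_cons_of_mem _ hx))
  refine ⟨ofWord m e, ?_⟩
  rw [← ofWord_cons i.2, delta, ofWord_eq_ofWord_iff (fun _ => lt_of_mem_delta)
    (List.forall_mem_cons.2 ⟨i.2, he'⟩)]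
  exact he

theorem exists_of_mul_delta (i : Fin m) : ∃ j, of i * delta m = delta m * of j := by
  obtain ⟨j, hj, h⟩ := exists_cons_delta_eqv i.2
  refine ⟨⟨j, hj⟩, ?_⟩
  rw [delta, ← ofWord_cons i.2, ← ofWord_singleton hj, ← ofWord_append,
    ofWord_eq_ofWord_iff (List.forall_mem_cons.2 ⟨i.2, fun _ => lt_of_mem_delta⟩)
      (List.forall_mem_append.2 ⟨fun _ => lt_of_mem_delta, by simpa using hj⟩)]
  exact h

theorem exists_mul_delta_pow (a : BraidMonoid m) (k : ℕ) :
    ∃ b, a * delta m ^ k = delta m ^ k * b := by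
  induction k generalizing a with
  | zero => exact ⟨a, by simp⟩
  | succ k ih =>
    have : ∃ b, a * delta m = delta m * b := by
      induction a using induction_on with
      | one => exact ⟨1, by simp⟩
      | mul i a ih =>
        obtain ⟨b, hb⟩ := ih
        obtain ⟨j, hj⟩ := exists_of_mul_delta i
        exact ⟨of j * b, by rw [mul_assoc, hb, ← mul_assoc, hj, mul_assoc]⟩
    obtain ⟨b, hb⟩ := this
    obtain ⟨c, hc⟩ := ih b
    exact ⟨c, by rw [pow_succ', ← mul_assoc, hb, mul_assoc, hc, ← mul_assoc]⟩

theorem exists_dvd_delta_pow (a : BraidMonoid m) : ∃ k, a ∣ delta m ^ k := by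
  induction a using induction_on with
  | one => exact ⟨0, one_dvd _⟩
  | mul i a ih =>
    obtain ⟨k, hk⟩ := ih
    obtain ⟨e, he⟩ := of_dvd_delta i
    obtain ⟨e', he'⟩ := exists_mul_delta_pow e k
    refine ⟨k + 1, (mul_dvd_mul_left (of i) hk).trans ⟨e', ?_⟩⟩
    rw [pow_succ']
    nth_rewrite 1 [he]
    rw [mul_assoc, he', mul_assoc]

theorem exists_dvd_dvd (a b : BraidMonoid m) : ∃ c, a ∣ c ∧ b ∣ c := by
  obtain ⟨k, hk⟩ := exists_dvd_delta_pow a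
  obtain ⟨l, hl⟩ := exists_dvd_delta_pow b
  exact ⟨delta m ^ (k + l), hk.trans (pow_dvd_pow _ (by omega)),
    hl.trans (pow_dvd_pow _ (by omega))⟩

theorem exists_mul_eq_mul (a b : BraidMonoid m) : ∃ c d, c * a = d * b := by
  obtain ⟨_, ⟨c, hc⟩, ⟨d, hd⟩⟩ := exists_dvd_dvd (rev a) (rev b)
  refine ⟨rev c, rev d, ?_⟩
  rw [← rev_rev a, ← rev_rev b, ← rev_mul, ← rev_mul, ← hc, ← hd]

theorem exists_isLcm_of_of_dvd {h : BraidMonoid m}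
    (ih : ∀ h' : BraidMonoid m, length h' < length h → ∀ a b, a ∣ h' → b ∣ h' →
      ∃ l, IsLcm a b l)
    {i : Fin m} {b : BraidMonoid m} (hi : of i ∣ h) (hb : b ∣ h) : ∃ l, IsLcm (of i) b l := by
  rcases eq_one_or_exists_eq_of_mul b with rfl | ⟨j, b, rfl⟩
  · exact ⟨of i, dvd_rfl, one_dvd _, fun _ hc _ => hc⟩
  obtain ⟨x, hx⟩ := hi
  obtain ⟨s, hs⟩ := hb
  rw [mul_assoc] at hs
  obtain ⟨w, -, hw⟩ := exists_eq_complement_mul (hx.symm.trans hs)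
  obtain ⟨l, hcl, hbl, hl⟩ := ih (b * s) (by rw [hs, length_mul (of j), length_of]; omega)
    (ofWord m (BraidWord.complement j i)) b ⟨w, hw⟩ (dvd_mul_right b s)
  refine ⟨of j * l, ?_, mul_dvd_mul_left _ hbl, ?_⟩
  · exact (dvd_mul_right _ _).trans ((of_mul_complement i j).symm ▸ mul_dvd_mul_left _ hcl)
  · rintro c ⟨x', hx'⟩ ⟨s', hs'⟩
    rw [mul_assoc] at hs'
    obtain ⟨w', -, hw'⟩ := exists_eq_complement_mul (hx'.symm.trans hs')
    rw [hs']
    exact mul_dvd_mul_left _ (hl _ ⟨w', hw'⟩ (dvd_mul_right b s'))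

theorem exists_isLcm_of_dvd (h : BraidMonoid m) :
    ∀ a b, a ∣ h → b ∣ h → ∃ l, IsLcm a b l := by
  induction hn : length h using Nat.strong_induction_on generalizing h with
  | _ n ih =>
  replace ih : ∀ h' : BraidMonoid m, length h' < length h → ∀ a b, a ∣ h' → b ∣ h' →
      ∃ l, IsLcm a b l :=
    fun h' lt => ih _ (hn ▸ lt) h' rfl
  intro a b ha hb
  rcases eq_one_or_exists_eq_of_mul a with rfl | ⟨i, a, rfl⟩
  · exact ⟨b, one_dvd _, dvd_rfl, fun _ _ hc => hc⟩
  have hi : of i ∣ h := dvd_of_mul_right_dvd ha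
  obtain ⟨c, ⟨d, rfl⟩, hbc, hc⟩ := exists_isLcm_of_of_dvd ih hi hb
  obtain ⟨t, ht⟩ := hc h hi hb
  rw [mul_assoc] at ht
  obtain ⟨l, hal, hdl, hl⟩ := ih (d * t) (by rw [ht, length_mul (of i), length_of]; omega) a d
    (mul_dvd_mul_iff_left_of_cancel.1 (ht ▸ ha)) (dvd_mul_right d t)
  refine ⟨of i * l, mul_dvd_mul_left _ hal, hbc.trans (mul_dvd_mul_left _ hdl), fun z hz hbz => ?_⟩
  obtain ⟨s, hs⟩ := hc z (dvd_of_mul_right_dvd hz) hbz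
  rw [mul_assoc] at hs
  rw [hs] at hz ⊢
  exact mul_dvd_mul_left _ (hl _ (mul_dvd_mul_iff_left_of_cancel.1 hz) (dvd_mul_right d s))

theorem exists_isLcm (a b : BraidMonoid m) : ∃ l, IsLcm a b l :=
  let ⟨c, ha, hb⟩ := exists_dvd_dvd a b
  exists_isLcm_of_dvd c a b ha hb

def evalWord (m : ℕ) (w : List ℕ) : PresentedGroup (braidRels m) :=
  (w.map fun i => if h : i < m then PresentedGroup.of ⟨i, h⟩ else 1).prod

theorem evalWord_eq_of_step {u v : List ℕ} (h : Step u v) (hu : ∀ x ∈ u, x < m) :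
    evalWord m u = evalWord m v := by
  cases h with
  | @comm a b i j hf =>
    have hi : i < m := hu i (by simp)
    have hj : j < m := hu j (by simp)
    simp only [evalWord, List.map_append, List.map_cons, List.prod_append, List.prod_cons,
      dif_pos hi, dif_pos hj]
    congr 1
    simp only [← mul_assoc]
    congr 1
    rcases hf with hf | hf
    · exact braidRels_comm (i := ⟨i, hi⟩) (j := ⟨j, hj⟩) hf
    · exact (braidRels_comm (i := ⟨j, hj⟩) (j := ⟨i, hi⟩) hf).symm
  | @braid a b i j hf =>
    have hi : i < m := hu i (by simp)
    have hj : j < m := hu j (by simp)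
    simp only [evalWord, List.map_append, List.map_cons, List.prod_append, List.prod_cons,
      dif_pos hi, dif_pos hj]
    congr 1
    simp only [← mul_assoc]
    congr 1
    rcases hf with hf | hf
    · exact braidRels_braid (i := ⟨i, hi⟩) (j := ⟨j, hj⟩) hf
    · exact (braidRels_braid (i := ⟨j, hj⟩) (j := ⟨i, hi⟩) hf).symm

theorem evalWord_eq_of_eqv {u v : List ℕ} (h : u ≋ v) (hu : ∀ x ∈ u, x < m) :
    evalWord m u = evalWord m v := by
  induction h with
  | refl => rfl
  | tail huw s ih =>
    exact ih.trans (evalWord_eq_of_step s fun x hx => hu x ((Eqv.mem_iff huw).2 hx))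

def toGroup (m : ℕ) : BraidMonoid m →* PresentedGroup (braidRels m) :=
  Con.lift _ (FreeMonoid.lift PresentedGroup.of) fun u v h => by
    have key (w : FreeMonoid (Fin m)) :
        FreeMonoid.lift PresentedGroup.of w = evalWord m (w.toList.map Fin.val) := by
      simp [evalWord, FreeMonoid.lift_apply, List.map_map, Function.comp_def]
    rw [Con.ker_rel, key, key]
    exact evalWord_eq_of_eqv h (by simp)

@[simp] theorem toGroup_of (i : Fin m) : toGroup m (of i) = PresentedGroup.of i := by
  simp [toGroup, of]

noncomputable instance : OreLocalization.OreSet (⊤ : Submonoid (BraidMonoid m)) where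
  ore_right_cancel _ _ _ h := ⟨1, by rw [mul_right_cancel h]⟩
  oreNum r s := (exists_mul_eq_mul r s).choose_spec.choose
  oreDenom r s := ⟨(exists_mul_eq_mul r s).choose, trivial⟩
  ore_eq r s := (exists_mul_eq_mul r s).choose_spec.choose_spec

noncomputable def toUnits (m : ℕ) :
    PresentedGroup (braidRels m) →*
      (OreLocalization (⊤ : Submonoid (BraidMonoid m)) (BraidMonoid m))ˣ :=
  PresentedGroup.toGroup
    (f := fun i => OreLocalization.numeratorUnit (⟨of i, trivial⟩ : (⊤ : Submonoid _))) <| by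
    rintro _ (⟨i, j, h, rfl⟩ | ⟨i, j, h, rfl⟩) <;>
      simp only [map_mul, map_inv, FreeGroup.lift_apply_of, mul_inv_eq_one] <;> ext <;>
      simp only [Units.val_mul]
    · change OreLocalization.numeratorHom (of i) * OreLocalization.numeratorHom (of j) =
        OreLocalization.numeratorHom (of j) * OreLocalization.numeratorHom (of i)
      rw [← map_mul, ← map_mul, of_mul_of_comm h]
    · change OreLocalization.numeratorHom (of i) * OreLocalization.numeratorHom (of j) *
          OreLocalization.numeratorHom (of i) =
        OreLocalization.numeratorHom (of j) * OreLocalization.numeratorHom (of i) *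
          OreLocalization.numeratorHom (of j)
      rw [← map_mul, ← map_mul, ← map_mul, ← map_mul, of_mul_of_mul_of h]

theorem toGroup_injective : Function.Injective (toGroup m) := by
  have h (a : BraidMonoid m) : (toUnits m (toGroup m a) : OreLocalization ⊤ (BraidMonoid m)) =
      OreLocalization.numeratorHom a := by
    induction a using induction_on with
    | one => simp only [map_one, Units.val_one]
    | mul i a ih =>
      rw [map_mul, map_mul, Units.val_mul, ih, toGroup_of, toUnits, PresentedGroup.toGroup.of,
        map_mul]
      rfl
  intro a b hab
  exact OreLocalization.numeratorHom_injective ((h a).symm.trans (hab ▸ h b))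

def positiveCone (m : ℕ) : Submonoid (PresentedGroup (braidRels m)) := MonoidHom.mrange (toGroup m)

instance : PartialOrder (PresentedGroup (braidRels m)) :=
  (positiveCone m).leftOrder fun a ⟨p, hp⟩ ⟨q, hq⟩ => by
    have : p * q = 1 := toGroup_injective (by rw [map_mul, hp, hq, mul_inv_cancel, map_one])
    rw [← hp, eq_one_of_mul_eq_one this, map_one]

theorem le_iff {a b : PresentedGroup (braidRels m)} : a ≤ b ↔ a⁻¹ * b ∈ positiveCone m := Iff.rfl

instance : MulLeftMono (PresentedGroup (braidRels m)) where
  elim g a b h := by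
    beta_reduce
    rwa [le_iff, mul_inv_rev, mul_assoc, inv_mul_cancel_left]

theorem one_le_iff {g : PresentedGroup (braidRels m)} : 1 ≤ g ↔ ∃ p, toGroup m p = g := by
  rw [le_iff, inv_one, one_mul]; rfl

theorem toGroup_le_toGroup_iff {p q : BraidMonoid m} : toGroup m p ≤ toGroup m q ↔ p ∣ q := by
  constructor
  · rintro ⟨r, hr⟩
    exact ⟨r, toGroup_injective (by rw [map_mul, hr, mul_inv_cancel_left])⟩
  · rintro ⟨r, rfl⟩
    exact ⟨r, by rw [map_mul, inv_mul_cancel_left]⟩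

theorem exists_toGroup_mul_eq (g : PresentedGroup (braidRels m)) :
    ∃ p q, toGroup m p * g = toGroup m q := by
  let H : Subgroup (PresentedGroup (braidRels m)) :=
    { carrier := {g | ∃ p q, toGroup m p * g = toGroup m q}
      one_mem' := ⟨1, 1, by simp⟩
      mul_mem' := by
        rintro a b ⟨p₁, q₁, h₁⟩ ⟨p₂, q₂, h₂⟩
        obtain ⟨c, d, hcd⟩ := exists_mul_eq_mul q₁ p₂
        refine ⟨c * p₁, d * q₂, ?_⟩
        rw [map_mul, mul_assoc, ← mul_assoc (toGroup m p₁), h₁, ← mul_assoc, ← map_mul, hcd,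
          map_mul, mul_assoc, h₂, map_mul]
      inv_mem' := by
        rintro a ⟨p, q, h⟩
        exact ⟨q, p, by rw [← h, mul_inv_cancel_right]⟩ }
  exact PresentedGroup.generated_by _ H (fun i => ⟨1, of i, by simp⟩) g

instance : IsCodirectedOrder (PresentedGroup (braidRels m)) where
  directed a b := by
    obtain ⟨p₁, q₁, h₁⟩ := exists_toGroup_mul_eq a
    obtain ⟨p₂, q₂, h₂⟩ := exists_toGroup_mul_eq b
    obtain ⟨c₁, c₂, hc⟩ := exists_mul_eq_mul p₁ p₂
    refine ⟨(toGroup m (c₁ * p₁))⁻¹, ⟨c₁ * q₁, ?_⟩, ⟨c₂ * q₂, ?_⟩⟩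
    · rw [inv_inv, map_mul, map_mul, mul_assoc, h₁]
    · rw [inv_inv, hc, map_mul, map_mul, mul_assoc, h₂]

theorem isLUB_pair_toGroup {p q l : BraidMonoid m} (h : IsLcm p q l) :
    IsLUB {toGroup m p, toGroup m q} (toGroup m l) := by
  obtain ⟨hpl, hql, hl⟩ := h
  refine ⟨?_, fun z hz => ?_⟩
  · rintro _ (rfl | rfl) <;> rwa [toGroup_le_toGroup_iff]
  · have hpz : toGroup m p ≤ z := hz (Set.mem_insert _ _)
    have hqz : toGroup m q ≤ z := hz (Set.mem_insert_of_mem _ rfl)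
    obtain ⟨h, rfl⟩ := one_le_iff.1 ((one_le_iff.2 ⟨p, rfl⟩).trans hpz)
    rw [toGroup_le_toGroup_iff] at hpz hqz ⊢
    exact hl h hpz hqz

theorem exists_isLUB_pair (a b : PresentedGroup (braidRels m)) : ∃ c, IsLUB {a, b} c := by
  refine exists_isLUB_pair_of_one_le (fun a b ha hb => ?_) a b
  obtain ⟨p, rfl⟩ := one_le_iff.1 ha
  obtain ⟨q, rfl⟩ := one_le_iff.1 hb
  obtain ⟨l, hl⟩ := exists_isLcm p q
  exact ⟨_, isLUB_pair_toGroup hl⟩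

end BraidMonoid

/-- The braid group `B_n` is torsion-free: its only element of finite order is the identity. -/
theorem braidGroup_isTorsionFree (n : ℕ) : Monoid.IsTorsionFree (BraidGroup n) :=
  fun _ hg hfin => hg (eq_one_of_isOfFinOrder BraidMonoid.exists_isLUB_pair hfin)
end
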